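/- Let R be a root system in Euclidean space V and define the endomorphism F₀ of V by F₀(v) = Σ_{α ∈ R} ⟨v, α⟩ α∨ (sum over all roots, where ⟨v,α⟩ = 2(v,α)/(α,α) is extended linearly and α∨ denotes the coroot identified with a vector via the inner product). Then for every coroot β∨, F₀(β) is a strictly positive multiple of β∨; in particular F₀ is nondegenerate on the span of R. -/

import Mathlib

open RealInnerProductSpace

/-- The coroot `α∨ = 2α/(α,α)` of a vector `α` in a real inner product space. -/
noncomputable def coroot {V : Type*} [NormedAddCommGroup V] [InnerProductSpace ℝ V] (v : V) :
    V :=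
  (2 / ⟪v, v⟫) • v

/-- The reflection in the hyperplane orthogonal to `α`. -/
noncomputable def reflFun {V : Type*} [NormedAddCommGroup V] [InnerProductSpace ℝ V]
    (α v : V) : V :=
  v - (2 * ⟪v, α⟫ / ⟪α, α⟫) • α

/-!
Every orthogonal transformation preserving `R` commutes with `F₀`. The reflection `s_β` in the
hyperplane `β⊥` preserves `R` and sends `β` to `-β`, so it sends `F₀ β` to `-F₀ β`; the vectors
negated by `s_β` are exactly the multiples of `β`. The multiple is positive because
`⟪F₀ v, v⟫ = Σ_{α ∈ R} ⟨v, α⟩²`, whose `α = β` term equals `4` when `v = β`. The same identity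
shows that `F₀ v = 0` forces `v ⊥ R`, hence `v = 0` on the span of `R`.
-/

section

variable {V : Type*} [NormedAddCommGroup V] [InnerProductSpace ℝ V]

noncomputable def F0 (R : Finset V) (v : V) : V :=
  ∑ α ∈ R, (2 * ⟪v, α⟫ / ⟪α, α⟫) • coroot α

lemma real_inner_coroot_left (α v : V) : ⟪coroot α, v⟫ = 2 * ⟪v, α⟫ / ⟪α, α⟫ := by
  rw [coroot, real_inner_smul_left, real_inner_comm v α]
  ring

lemma LinearIsometryEquiv.map_coroot (σ : V ≃ₗᵢ[ℝ] V) (α : V) : σ (coroot α) = coroot (σ α) := by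
  rw [coroot, coroot, σ.map_smul, σ.inner_map_map]

lemma reflFun_eq_reflection (β v : V) : reflFun β v = (ℝ ∙ β)ᗮ.reflection v := by
  rw [Submodule.reflection_orthogonal_apply, Submodule.reflection_singleton_apply, reflFun,
    real_inner_self_eq_norm_sq, real_inner_comm β v]
  simp only [RCLike.ofReal_real_eq_id, id_eq]
  module

lemma F0_neg (R : Finset V) (v : V) : F0 R (-v) = -F0 R v := by
  simp only [F0, inner_neg_left, mul_neg, neg_div, neg_smul, Finset.sum_neg_distrib]

lemma LinearIsometryEquiv.map_F0 (σ : V ≃ₗᵢ[ℝ] V) {R : Finset V} (hσ : ∀ α ∈ R, σ α ∈ R)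
    (v : V) : σ (F0 R v) = F0 R (σ v) := by
  have hinj : Set.InjOn σ R := σ.injective.injOn
  rw [F0, map_sum]
  refine Finset.sum_nbij σ hσ hinj (Finset.surjOn_of_injOn_of_card_le σ hσ hinj le_rfl)
    fun α _ ↦ ?_
  rw [map_smul, σ.inner_map_map, σ.inner_map_map, σ.map_coroot]

lemma inner_F0_self (R : Finset V) (v : V) :
    ⟪F0 R v, v⟫ = ∑ α ∈ R, (2 * ⟪v, α⟫ / ⟪α, α⟫) ^ 2 := by
  simp only [F0, sum_inner, real_inner_smul_left, real_inner_coroot_left, sq]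

lemma F0_mem_span_singleton {R : Finset V} {β : V} (hrefl : ∀ α ∈ R, reflFun β α ∈ R) :
    F0 R β ∈ ℝ ∙ β := by
  set σ := (ℝ ∙ β)ᗮ.reflection
  have hσ : ∀ α ∈ R, σ α ∈ R := fun α hα ↦ reflFun_eq_reflection β α ▸ hrefl α hα
  have hneg : σ (F0 R β) = -F0 R β := by
    rw [σ.map_F0 hσ, Submodule.reflection_orthogonalComplement_singleton_eq_neg, F0_neg]
  -- the reflection in `ℝ ∙ β` is `-σ`, and its fixed vectors are `ℝ ∙ β`
  rw [← Submodule.reflection_eq_self_iff, ← neg_neg ((ℝ ∙ β).reflection _),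
    ← Submodule.reflection_orthogonal_apply, hneg, neg_neg]

lemma inner_F0_self_pos {R : Finset V} {β : V} (hβR : β ∈ R) (hβ : β ≠ 0) :
    0 < ⟪F0 R β, β⟫ := by
  have hterm : (2 * ⟪β, β⟫ / ⟪β, β⟫) ^ 2 = 4 := by
    rw [mul_div_assoc, div_self (inner_self_ne_zero.mpr hβ)]
    norm_num
  rw [inner_F0_self]
  calc (0 : ℝ) < (2 * ⟪β, β⟫ / ⟪β, β⟫) ^ 2 := by rw [hterm]; norm_num
    _ ≤ ∑ α ∈ R, (2 * ⟪β, α⟫ / ⟪α, α⟫) ^ 2 :=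
      Finset.single_le_sum (f := fun α ↦ (2 * ⟪β, α⟫ / ⟪α, α⟫) ^ 2) (fun _ _ ↦ sq_nonneg _) hβR

lemma eq_zero_of_F0_eq_zero {R : Finset V} {v : V} (hv : v ∈ Submodule.span ℝ (R : Set V))
    (h : F0 R v = 0) : v = 0 := by
  have hsum : ∑ α ∈ R, (2 * ⟪v, α⟫ / ⟪α, α⟫) ^ 2 = 0 := by
    rw [← inner_F0_self, h, inner_zero_left]
  have horth : (R : Set V) ⊆ (ℝ ∙ v)ᗮ := fun α hα ↦ by
    have := (Finset.sum_eq_zero_iff_of_nonneg fun _ _ ↦ sq_nonneg _).mp hsum α hα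
    rw [SetLike.mem_coe, Submodule.mem_orthogonal_singleton_iff_inner_right]
    obtain hvα | rfl : ⟪v, α⟫ = 0 ∨ α = 0 := by simpa using this
    exacts [hvα, inner_zero_right v]
  exact inner_self_eq_zero.mp
    (Submodule.mem_orthogonal_singleton_iff_inner_right.mp (Submodule.span_le.mpr horth hv))

lemma smul_eq_smul_coroot (c : ℝ) {β : V} (hβ : β ≠ 0) :
    c • β = (c * ⟪β, β⟫ / 2) • coroot β := by
  rw [coroot, smul_smul]
  congr 1
  field_simp [inner_self_ne_zero.mpr hβ]

end

theorem F0_root_eq_pos_smul_coroot_general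
    {V : Type*} [NormedAddCommGroup V] [InnerProductSpace ℝ V]
    (R : Finset V) (hne : ∀ α ∈ R, α ≠ 0)
    (hrefl : ∀ α ∈ R, ∀ β ∈ R, reflFun α β ∈ R) :
    (∀ β ∈ R, ∃ c : ℝ, 0 < c ∧
        ∑ α ∈ R, (2 * ⟪β, α⟫ / ⟪α, α⟫) • coroot α = c • coroot β) ∧
      ∀ v ∈ Submodule.span ℝ (R : Set V),
        (∑ α ∈ R, (2 * ⟪v, α⟫ / ⟪α, α⟫) • coroot α) = 0 → v = 0 := by
  refine ⟨fun β hβR ↦ ?_, fun v hv ↦ eq_zero_of_F0_eq_zero hv⟩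
  obtain ⟨c, hc⟩ := Submodule.mem_span_singleton.mp (F0_mem_span_singleton (hrefl β hβR))
  have hpos : 0 < c * ⟪β, β⟫ := by
    rw [← real_inner_smul_left, hc]
    exact inner_F0_self_pos hβR (hne β hβR)
  refine ⟨c * ⟪β, β⟫ / 2, by positivity, ?_⟩
  rw [← smul_eq_smul_coroot c (hne β hβR), hc]
  rfl

/-- For a reduced crystallographic root system `R`, the endomorphism
`F₀(v) = Σ_{α ∈ R} ⟨v, α⟩ α∨` sends every root `β` to a strictly positive multiple of the
coroot `β∨`; in particular `F₀` is nondegenerate on the span of `R`. -/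
theorem F0_root_eq_pos_smul_coroot
    {V : Type*} [NormedAddCommGroup V] [InnerProductSpace ℝ V]
    (R : Finset V) (hne : ∀ α ∈ R, α ≠ 0)
    (hcrys : ∀ α ∈ R, ∀ β ∈ R, ∃ n : ℤ, 2 * ⟪α, β⟫ / ⟪β, β⟫ = (n : ℝ))
    (hred : ∀ α ∈ R, ∀ c : ℝ, c • α ∈ R → c = 1 ∨ c = -1)
    (hrefl : ∀ α ∈ R, ∀ β ∈ R, reflFun α β ∈ R) :
    (∀ β ∈ R, ∃ c : ℝ, 0 < c ∧
        ∑ α ∈ R, (2 * ⟪β, α⟫ / ⟪α, α⟫) • coroot α = c • coroot β) ∧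
      ∀ v ∈ Submodule.span ℝ (R : Set V),
        (∑ α ∈ R, (2 * ⟪v, α⟫ / ⟪α, α⟫) • coroot α) = 0 → v = 0 :=
  F0_root_eq_pos_smul_coroot_general R hne hrefl
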